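/- For every graph G without isolated vertices and every vertex v such that G − v has no isolated vertices, the Staller-start game total domination numbers satisfy γ_g^t'(G) ≤ γ_g^t'(G − v) + 4. -/
import Mathlib


open Finset

open scoped Classical

variable {V : Type*} [Fintype V]

/-- The set of neighbors of `v` (the vertices that `v` totally dominates). -/
noncomputable def nbr (G : SimpleGraph V) (v : V) : Finset V :=
  Finset.univ.filter (G.Adj v)

/-- The legal moves, given that the vertices of `D` are already totally dominated:
a vertex is playable iff it totally dominates at least one vertex outside `D`. -/
noncomputable def movesF (G : SimpleGraph V) (D : Finset V) : Finset V :=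
  Finset.univ.filter fun v => ¬ nbr G v ⊆ D

lemma movesF_card (G : SimpleGraph V) (D : Finset V) {v : V} (hv : v ∈ movesF G D) :
    ((univ : Finset V) \ (D ∪ nbr G v)).card < ((univ : Finset V) \ D).card := by
  simp only [movesF, mem_filter] at hv
  obtain ⟨u, hu, hu2⟩ := Finset.not_subset.mp hv.2
  apply Finset.card_lt_card
  constructor
  · exact Finset.sdiff_subset_sdiff le_rfl Finset.subset_union_left
  · intro hsub
    have h1 : u ∈ (univ : Finset V) \ D := by simp [hu2]
    have h2 := hsub h1
    simp only [mem_sdiff, mem_univ, true_and, Finset.mem_union] at h2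
    exact h2 (Or.inr hu)

/-- Optimal number of moves in the total domination game on `G` with the vertices of `D`
already totally dominated; `turn = true` means Dominator (the minimizer) moves next,
`turn = false` means Staller (the maximizer) moves next.  The game ends when no legal
move remains (for graphs without isolated vertices this means every vertex is totally
dominated). -/
noncomputable def gtVal (G : SimpleGraph V) (turn : Bool) (D : Finset V) : ℕ :=
  if h : (movesF G D).Nonempty then
    if turn then
      1 + ((movesF G D).attach.inf' (by simpa using h)
        fun v => gtVal G false (D ∪ nbr G v.1))
    else
      1 + ((movesF G D).attach.sup' (by simpa using h)
        fun v => gtVal G true (D ∪ nbr G v.1))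
  else 0
termination_by ((univ : Finset V) \ D).card
decreasing_by
  · exact movesF_card G D v.2
  · exact movesF_card G D v.2

/-- The game total domination number `γ_g^t(G|D)` (Dominator-start, `D` predominated). -/
noncomputable def gtD (G : SimpleGraph V) (D : Finset V := ∅) : ℕ := gtVal G true D

/-- The Staller-start game total domination number `γ_g^t'(G|D)`. -/
noncomputable def gtS (G : SimpleGraph V) (D : Finset V := ∅) : ℕ := gtVal G false D

/-- `G` has no isolated vertices. -/
def NoIsolated (G : SimpleGraph V) : Prop := ∀ v : V, ∃ w, G.Adj v w


lemma mem_nbr (G : SimpleGraph V) {u w : V} : w ∈ nbr G u ↔ G.Adj u w := by simp [nbr]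

lemma mem_movesF (G : SimpleGraph V) {D : Finset V} {u : V} :
    u ∈ movesF G D ↔ ¬ nbr G u ⊆ D := by simp [movesF]

lemma movesF_anti (G : SimpleGraph V) {A B : Finset V} (h : B ⊆ A) :
    movesF G A ⊆ movesF G B := by
  intro u hu
  rw [mem_movesF] at hu ⊢
  exact fun hs => hu (hs.trans h)

lemma gtVal_eq_zero (G : SimpleGraph V) {D : Finset V} (h : ¬ (movesF G D).Nonempty)
    (t : Bool) : gtVal G t D = 0 := by
  rw [gtVal]; simp [h]

lemma gtVal_true_eq (G : SimpleGraph V) {D : Finset V} (h : (movesF G D).Nonempty) :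
    gtVal G true D = 1 + ((movesF G D).attach.inf' (by simpa using h)
      fun w => gtVal G false (D ∪ nbr G w.1)) := by
  rw [gtVal]; simp [h]

lemma gtVal_false_eq (G : SimpleGraph V) {D : Finset V} (h : (movesF G D).Nonempty) :
    gtVal G false D = 1 + ((movesF G D).attach.sup' (by simpa using h)
      fun w => gtVal G true (D ∪ nbr G w.1)) := by
  rw [gtVal]; simp [h]

lemma gtVal_true_le (G : SimpleGraph V) {D : Finset V} {w : V} (hw : w ∈ movesF G D) :
    gtVal G true D ≤ 1 + gtVal G false (D ∪ nbr G w) := by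
  rw [gtVal_true_eq G ⟨w, hw⟩]
  exact Nat.add_le_add_left (Finset.inf'_le _ (Finset.mem_attach _ ⟨w, hw⟩)) 1

lemma le_gtVal_false (G : SimpleGraph V) {D : Finset V} {w : V} (hw : w ∈ movesF G D) :
    1 + gtVal G true (D ∪ nbr G w) ≤ gtVal G false D := by
  rw [gtVal_false_eq G ⟨w, hw⟩]
  exact Nat.add_le_add_left (Finset.le_sup' (fun w : {x // x ∈ movesF G D} => gtVal G true (D ∪ nbr G w.1)) (Finset.mem_attach _ ⟨w, hw⟩)) 1

lemma gtVal_true_exists (G : SimpleGraph V) {D : Finset V} (h : (movesF G D).Nonempty) :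
    ∃ w ∈ movesF G D, gtVal G true D = 1 + gtVal G false (D ∪ nbr G w) := by
  obtain ⟨w, -, hw⟩ := Finset.exists_mem_eq_inf' (s := (movesF G D).attach)
    (by simpa using h) (fun w => gtVal G false (D ∪ nbr G w.1))
  exact ⟨w.1, w.2, by rw [gtVal_true_eq G h, hw]⟩

lemma gtVal_false_exists (G : SimpleGraph V) {D : Finset V} (h : (movesF G D).Nonempty) :
    ∃ w ∈ movesF G D, gtVal G false D = 1 + gtVal G true (D ∪ nbr G w) := by
  obtain ⟨w, -, hw⟩ := Finset.exists_mem_eq_sup' (s := (movesF G D).attach)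
    (by simpa using h) (fun w => gtVal G true (D ∪ nbr G w.1))
  exact ⟨w.1, w.2, by rw [gtVal_false_eq G h, hw]⟩
lemma gtVal_cp_aux (G : SimpleGraph V) :
    ∀ n (t : Bool) (A B : Finset V), ((univ : Finset V) \ B).card ≤ n → B ⊆ A →
      gtVal G t A ≤ gtVal G t B := by
  intro n
  induction n with
  | zero =>
    intro t A B hc hBA
    have hB : (univ : Finset V) ⊆ B :=
      Finset.sdiff_eq_empty_iff_subset.mp (Finset.card_eq_zero.mp (Nat.le_zero.mp hc))
    have : A = B := subset_antisymm ((subset_univ A).trans hB) hBA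
    rw [this]
  | succ n ih =>
    intro t A B hc hBA
    by_cases hA : (movesF G A).Nonempty
    · have hmAB := movesF_anti G hBA
      cases t with
      | false =>
        obtain ⟨u, huA, hEq⟩ := gtVal_false_exists G hA
        have huB : u ∈ movesF G B := hmAB huA
        have hcard : ((univ : Finset V) \ (B ∪ nbr G u)).card ≤ n :=
          Nat.lt_succ_iff.mp (lt_of_lt_of_le (movesF_card G B huB) hc)
        calc gtVal G false A = 1 + gtVal G true (A ∪ nbr G u) := hEq
          _ ≤ 1 + gtVal G true (B ∪ nbr G u) :=
            Nat.add_le_add_left (ih true _ _ hcard (Finset.union_subset_union hBA le_rfl)) 1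
          _ ≤ gtVal G false B := le_gtVal_false G huB
      | true =>
        have hB : (movesF G B).Nonempty := hA.mono hmAB
        obtain ⟨w, hwB, hEq⟩ := gtVal_true_exists G hB
        have hcard : ((univ : Finset V) \ (B ∪ nbr G w)).card ≤ n :=
          Nat.lt_succ_iff.mp (lt_of_lt_of_le (movesF_card G B hwB) hc)
        by_cases hwA : w ∈ movesF G A
        · calc gtVal G true A ≤ 1 + gtVal G false (A ∪ nbr G w) := gtVal_true_le G hwA
            _ ≤ 1 + gtVal G false (B ∪ nbr G w) :=
              Nat.add_le_add_left (ih false _ _ hcard (Finset.union_subset_union hBA le_rfl)) 1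
            _ = gtVal G true B := hEq.symm
        · have hNw : nbr G w ⊆ A := by
            rw [mem_movesF, not_not] at hwA; exact hwA
          have hCA : B ∪ nbr G w ⊆ A := Finset.union_subset hBA hNw
          have h1 : gtVal G true A ≤ gtVal G true (B ∪ nbr G w) := ih true A _ hcard hCA
          obtain ⟨u, huA⟩ := hA
          have huC : u ∈ movesF G (B ∪ nbr G w) := movesF_anti G hCA huA
          have hcard2 : ((univ : Finset V) \ (B ∪ nbr G w ∪ nbr G u)).card ≤ n :=
            le_of_lt (lt_of_lt_of_le (movesF_card G _ huC) hcard)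
          have h2 : gtVal G true (B ∪ nbr G w) ≤ 1 + gtVal G false (B ∪ nbr G w) := by
            calc gtVal G true (B ∪ nbr G w)
                ≤ 1 + gtVal G false (B ∪ nbr G w ∪ nbr G u) := gtVal_true_le G huC
              _ ≤ 1 + gtVal G false (B ∪ nbr G w) :=
                Nat.add_le_add_left (ih false _ _ hcard Finset.subset_union_left) 1
          rw [hEq]
          exact h1.trans h2
    · rw [gtVal_eq_zero G hA]
      exact Nat.zero_le _

lemma gtVal_cp (G : SimpleGraph V) {t : Bool} {A B : Finset V} (h : B ⊆ A) :
    gtVal G t A ≤ gtVal G t B :=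
  gtVal_cp_aux G _ t A B le_rfl h

lemma gtVal_parity (G : SimpleGraph V) (D : Finset V) :
    gtVal G true D ≤ gtVal G false D + 1 := by
  by_cases h : (movesF G D).Nonempty
  · obtain ⟨w, hw⟩ := h
    calc gtVal G true D ≤ 1 + gtVal G false (D ∪ nbr G w) := gtVal_true_le G hw
      _ ≤ 1 + gtVal G false D := Nat.add_le_add_left (gtVal_cp G Finset.subset_union_left) 1
      _ = gtVal G false D + 1 := Nat.add_comm 1 _
  · rw [gtVal_eq_zero G h]
    exact Nat.zero_le _
set_option linter.unusedSectionVars false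
noncomputable def delMap (v : V) (D : Finset V) : Finset ↥({u : V | u ≠ v}) :=
  D.subtype fun u => u ∈ {u : V | u ≠ v}

lemma mem_delMap {v : V} {D : Finset V} {a : ↥({u : V | u ≠ v})} :
    a ∈ delMap v D ↔ a.1 ∈ D := Finset.mem_subtype

lemma delMap_mono {v : V} {D E : Finset V} (h : D ⊆ E) : delMap v D ⊆ delMap v E := by
  intro a ha
  rw [mem_delMap] at ha ⊢
  exact h ha

lemma delMap_union {v : V} {inst : DecidableEq ↥({u : V | u ≠ v})} (D E : Finset V) :
    delMap v (D ∪ E) =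
      @Union.union _ (@Finset.instUnion _ inst) (delMap v D) (delMap v E) := by
  apply Finset.ext
  intro a
  rw [Finset.mem_union, mem_delMap, mem_delMap, mem_delMap, Finset.mem_union]

lemma nbr_induce (G : SimpleGraph V) (v : V) (a : ↥({u : V | u ≠ v})) :
    nbr (G.induce {u : V | u ≠ v}) a = delMap v (nbr G a.1) := by
  ext b
  rw [mem_delMap, mem_nbr, mem_nbr]
  exact Iff.rfl

lemma mem_movesF_induce (G : SimpleGraph V) {v : V} {D : Finset V} (hvD : v ∈ D)
    (a : ↥({u : V | u ≠ v})) :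
    a ∈ movesF (G.induce {u : V | u ≠ v}) (delMap v D) ↔ a.1 ∈ movesF G D := by
  rw [mem_movesF, mem_movesF, nbr_induce, not_iff_not]
  constructor
  · intro h w hw
    by_cases hwv : w = v
    · rw [hwv]; exact hvD
    · exact mem_delMap.mp (h ((mem_delMap (a := ⟨w, hwv⟩)).mpr hw))
  · intro h b hb
    exact mem_delMap.mpr (h (mem_delMap.mp hb))
lemma lemC (G : SimpleGraph V) (v : V) :
    ∀ n (t : Bool) (D : Finset V), ((univ : Finset V) \ D).card ≤ n → v ∈ D →
      (gtVal G t D ≤ gtVal (G.induce {u : V | u ≠ v}) t (delMap v D) + 2) ∧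
      (nbr G v ⊆ D → gtVal G t D ≤ gtVal (G.induce {u : V | u ≠ v}) t (delMap v D)) := by
  intro n
  induction n with
  | zero =>
    intro t D hc _
    have hD : (univ : Finset V) ⊆ D :=
      Finset.sdiff_eq_empty_iff_subset.mp (Finset.card_eq_zero.mp (Nat.le_zero.mp hc))
    have hmv : ¬ (movesF G D).Nonempty := by
      rintro ⟨u, hu⟩
      rw [mem_movesF] at hu
      exact hu ((subset_univ _).trans hD)
    rw [gtVal_eq_zero G hmv]
    exact ⟨Nat.zero_le _, fun _ => Nat.zero_le _⟩
  | succ n ih =>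
    intro t D hc hvD
    by_cases hA : (movesF G D).Nonempty
    · have hcard : ∀ {w : V}, w ∈ movesF G D → ((univ : Finset V) \ (D ∪ nbr G w)).card ≤ n :=
        fun hw => Nat.lt_succ_iff.mp (lt_of_lt_of_le (movesF_card G D hw) hc)
      constructor
      · -- weak part: ≤ + 2
        cases t with
        | true =>
          by_cases hB : (movesF (G.induce {u : V | u ≠ v}) (delMap v D)).Nonempty
          · obtain ⟨w', hw'B, hEq⟩ := gtVal_true_exists _ hB
            have hwG : w'.1 ∈ movesF G D := (mem_movesF_induce G hvD w').mp hw'B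
            have hIH := (ih false (D ∪ nbr G w'.1) (hcard hwG) (Finset.mem_union_left _ hvD)).1
            rw [nbr_induce G v w', ← delMap_union] at hEq
            have hle := gtVal_true_le G hwG
            omega
          · -- only legal move in G is v
            have hvmove : v ∈ movesF G D := by
              obtain ⟨u, hu⟩ := hA
              by_cases huv : u = v
              · rw [← huv]; exact hu
              · exact absurd ⟨⟨u, huv⟩, (mem_movesF_induce G hvD ⟨u, huv⟩).mpr hu⟩ hB
            have hend : ¬ (movesF G (D ∪ nbr G v)).Nonempty := by
              rintro ⟨u, hu⟩
              by_cases huv : u = v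
              · rw [huv, mem_movesF] at hu
                exact hu Finset.subset_union_right
              · have h1 : (⟨u, huv⟩ : ↥({u : V | u ≠ v})) ∈
                    movesF (G.induce {u : V | u ≠ v}) (delMap v (D ∪ nbr G v)) :=
                  (mem_movesF_induce G (Finset.mem_union_left _ hvD) ⟨u, huv⟩).mpr hu
                have h2 := movesF_anti (G.induce {u : V | u ≠ v})
                  (delMap_mono (Finset.subset_union_left (s₂ := nbr G v))) h1
                exact hB ⟨_, h2⟩
            have hle := gtVal_true_le G hvmove
            rw [gtVal_eq_zero G hend] at hle
            omega
        | false =>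
          obtain ⟨u, huA, hEq⟩ := gtVal_false_exists G hA
          by_cases huv : u = v
          · rw [huv] at huA hEq
            have hIH := (ih true (D ∪ nbr G v) (hcard huA) (Finset.mem_union_left _ hvD)).2
              Finset.subset_union_right
            have h2 : gtVal (G.induce {u : V | u ≠ v}) true (delMap v (D ∪ nbr G v)) ≤
                gtVal (G.induce {u : V | u ≠ v}) true (delMap v D) :=
              gtVal_cp _ (delMap_mono Finset.subset_union_left)
            have h3 := gtVal_parity (G.induce {u : V | u ≠ v}) (delMap v D)
            omega
          · have huB : (⟨u, huv⟩ : ↥({u : V | u ≠ v})) ∈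
                movesF (G.induce {u : V | u ≠ v}) (delMap v D) :=
              (mem_movesF_induce G hvD ⟨u, huv⟩).mpr huA
            have hIH := (ih true (D ∪ nbr G u) (hcard huA) (Finset.mem_union_left _ hvD)).1
            have hsup := le_gtVal_false (G.induce {u : V | u ≠ v}) huB
            rw [nbr_induce G v ⟨u, huv⟩, ← delMap_union,
              show ((⟨u, huv⟩ : ↥({u : V | u ≠ v})) : V) = u from rfl] at hsup
            omega
      · -- strong part
        intro hNv
        have hvnot : v ∉ movesF G D := by
          rw [mem_movesF, not_not]; exact hNv
        cases t with
        | true =>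
          have hB : (movesF (G.induce {u : V | u ≠ v}) (delMap v D)).Nonempty := by
            obtain ⟨u, hu⟩ := hA
            have huv : u ≠ v := fun h => hvnot (h ▸ hu)
            exact ⟨⟨u, huv⟩, (mem_movesF_induce G hvD ⟨u, huv⟩).mpr hu⟩
          obtain ⟨w', hw'B, hEq⟩ := gtVal_true_exists _ hB
          have hwG : w'.1 ∈ movesF G D := (mem_movesF_induce G hvD w').mp hw'B
          have hIH := (ih false (D ∪ nbr G w'.1) (hcard hwG) (Finset.mem_union_left _ hvD)).2
            (hNv.trans Finset.subset_union_left)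
          rw [nbr_induce G v w', ← delMap_union] at hEq
          have hle := gtVal_true_le G hwG
          omega
        | false =>
          obtain ⟨u, huA, hEq⟩ := gtVal_false_exists G hA
          have huv : u ≠ v := fun h => hvnot (h ▸ huA)
          have huB : (⟨u, huv⟩ : ↥({u : V | u ≠ v})) ∈
              movesF (G.induce {u : V | u ≠ v}) (delMap v D) :=
            (mem_movesF_induce G hvD ⟨u, huv⟩).mpr huA
          have hIH := (ih true (D ∪ nbr G u) (hcard huA) (Finset.mem_union_left _ hvD)).2
            (hNv.trans Finset.subset_union_left)
          have hsup := le_gtVal_false (G.induce {u : V | u ≠ v}) huB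
          rw [nbr_induce G v ⟨u, huv⟩, ← delMap_union,
            show ((⟨u, huv⟩ : ↥({u : V | u ≠ v})) : V) = u from rfl] at hsup
          omega
    · rw [gtVal_eq_zero G hA]
      exact ⟨Nat.zero_le _, fun _ => Nat.zero_le _⟩
lemma delMap_empty (v : V) : delMap v (∅ : Finset V) = ∅ := by
  apply Finset.ext
  intro a
  rw [mem_delMap]
  simp


/-- For every graph `G` without isolated vertices and every vertex `v`
such that `G − v` has no isolated vertices, `γ_g^t'(G) ≤ γ_g^t'(G − v) + 4`. -/
theorem gtS_vertex_removal {V : Type*} [Fintype V] (G : SimpleGraph V) (v : V)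
    (hG : NoIsolated G) (hGv : NoIsolated (G.induce {u | u ≠ v})) :
    gtS G ≤ gtS (G.induce {u | u ≠ v}) + 4 := by
  show gtVal G false ∅ ≤ gtVal (G.induce {u : V | u ≠ v}) false ∅ + 4
  by_cases h : (movesF G (∅ : Finset V)).Nonempty
  · have key : ∀ u ∈ movesF G (∅ : Finset V),
        gtVal G true (∅ ∪ nbr G u) ≤ gtVal (G.induce {u : V | u ≠ v}) false ∅ + 3 := by
      intro u hu
      by_cases hv : v ∈ nbr G u
      · have hvmem : v ∈ (∅ ∪ nbr G u : Finset V) := Finset.mem_union_right _ hv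
        have h1 := (lemC G v (((univ : Finset V) \ (∅ ∪ nbr G u)).card) true (∅ ∪ nbr G u)
          le_rfl hvmem).1
        have h2 : gtVal (G.induce {u : V | u ≠ v}) true (delMap v (∅ ∪ nbr G u)) ≤
            gtVal (G.induce {u : V | u ≠ v}) true ∅ := by
          rw [← delMap_empty v]
          exact gtVal_cp _ (delMap_mono (Finset.empty_subset _))
        have h3 := gtVal_parity (G.induce {u : V | u ≠ v}) ∅
        omega
      · obtain ⟨w, hw⟩ := hG v
        have hvw : v ∈ nbr G w := (mem_nbr G).mpr hw.symm
        have hwmem : w ∈ movesF G (∅ ∪ nbr G u) := by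
          rw [mem_movesF]
          intro hsub
          have := hsub hvw
          rw [Finset.mem_union] at this
          rcases this with h' | h'
          · exact absurd h' (Finset.notMem_empty v)
          · exact hv h'
        have h1 := gtVal_true_le G hwmem
        have hvmem : v ∈ (∅ ∪ nbr G u ∪ nbr G w : Finset V) := Finset.mem_union_right _ hvw
        have h2 := (lemC G v (((univ : Finset V) \ (∅ ∪ nbr G u ∪ nbr G w)).card) false
          (∅ ∪ nbr G u ∪ nbr G w) le_rfl hvmem).1
        have h3 : gtVal (G.induce {u : V | u ≠ v}) false (delMap v (∅ ∪ nbr G u ∪ nbr G w)) ≤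
            gtVal (G.induce {u : V | u ≠ v}) false ∅ := by
          rw [← delMap_empty v]
          exact gtVal_cp _ (delMap_mono (Finset.empty_subset _))
        omega
    rw [gtVal_false_eq G h]
    have hsup : ((movesF G (∅ : Finset V)).attach.sup' (by simpa using h)
        fun w => gtVal G true (∅ ∪ nbr G w.1)) ≤
        gtVal (G.induce {u : V | u ≠ v}) false ∅ + 3 :=
      Finset.sup'_le _ _ fun w _ => key w.1 w.2
    omega
  · rw [gtVal_eq_zero G h]
    exact Nat.zero_le _
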